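/- Suppose the Jacobian ∂k/∂z of the KKT operator at a DC OPF solution z* is nonsingular and every income s_i > 0. Then the LMB matrix ∂b/∂d = −diag(d ⊘ s)[F^⊤ 1](∂ν*/∂d) + diag(π(ν*) ⊘ s) is well-defined in a neighborhood of z*, where ∂ν*/∂d is the block of −(∂k/∂z)^{-1}(∂k/∂θ) corresponding to the equality-constraint dual variables and the demand parameters. -/

import Mathlib

set_option maxHeartbeats 1000000

open Matrix Metric

/-- Proposition 1: if the KKT Jacobian at a DC OPF solution is nonsingular and
incomes are positive, the dual solution map `ν*(d)` (the last component of the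
primal-dual solution map `z(d)`) exists and is differentiable near the solution,
and the LMB matrix formula
`∂b/∂d = −diag(d ⊘ s)[Fᵀ 1](∂ν*/∂d) + diag(π(ν*) ⊘ s)` holds there, with
`∂z/∂d = −(∂k/∂z)⁻¹ (∂k/∂d)` at the base point. -/
theorem lmb_well_defined (n mI M N : ℕ)
    (s : Fin N → ℝ) (hs : ∀ i, 0 < s i)
    (F : Matrix (Fin M) (Fin N) ℝ) (ω : Fin N → ℝ)
    (k : ((Fin n → ℝ) × (Fin mI → ℝ) × ((Fin M → ℝ) × ℝ)) × (Fin N → ℝ) →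
         (Fin n → ℝ) × (Fin mI → ℝ) × ((Fin M → ℝ) × ℝ))
    (hk : ContDiff ℝ 1 k)
    (zstar : (Fin n → ℝ) × (Fin mI → ℝ) × ((Fin M → ℝ) × ℝ))
    (d₀ : Fin N → ℝ)
    (hroot : k (zstar, d₀) = 0)
    (J : ((Fin n → ℝ) × (Fin mI → ℝ) × ((Fin M → ℝ) × ℝ)) ≃L[ℝ]
         ((Fin n → ℝ) × (Fin mI → ℝ) × ((Fin M → ℝ) × ℝ)))
    (hJ : ∀ u, fderiv ℝ k (zstar, d₀) (u, 0) = J u) :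
    ∃ ε > 0, ∃ z : (Fin N → ℝ) → (Fin n → ℝ) × (Fin mI → ℝ) × ((Fin M → ℝ) × ℝ),
      z d₀ = zstar ∧
      ContDiffOn ℝ 1 z (ball d₀ ε) ∧
      (∀ d ∈ ball d₀ ε, k (z d, d) = 0) ∧
      (∀ v, fderiv ℝ z d₀ v = -(J.symm (fderiv ℝ k (zstar, d₀) (0, v)))) ∧
      (∀ d ∈ ball d₀ ε, ∀ v,
        fderiv ℝ
          (fun d' => (Matrix.diagonal (fun i => d' i / s i)).mulVec
            (ω - (F.transpose.mulVec ((z d').2.2).1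
                    + ((z d').2.2).2 • (1 : Fin N → ℝ)))) d v =
        -((Matrix.diagonal (fun i => d i / s i)).mulVec
            (F.transpose.mulVec ((fderiv ℝ (fun d' => (z d').2.2) d v).1)
              + (fderiv ℝ (fun d' => (z d').2.2) d v).2 • (1 : Fin N → ℝ)))
          + (Matrix.diagonal (fun i =>
              (ω - (F.transpose.mulVec ((z d).2.2).1
                      + ((z d).2.2).2 • (1 : Fin N → ℝ))) i / s i)).mulVec v) := by
  classical
  set K : (((Fin n → ℝ) × (Fin mI → ℝ) × ((Fin M → ℝ) × ℝ)) × (Fin N → ℝ)) →L[ℝ] ((Fin n → ℝ) × (Fin mI → ℝ) × ((Fin M → ℝ) × ℝ)) := fderiv ℝ k (zstar, d₀) with hKdef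
  have hKd : HasFDerivAt k K (zstar, d₀) :=
    (hk.contDiffAt.differentiableAt one_ne_zero).hasFDerivAt
  set B : (Fin N → ℝ) →L[ℝ] ((Fin n → ℝ) × (Fin mI → ℝ) × ((Fin M → ℝ) × ℝ)) := K.comp (ContinuousLinearMap.inr ℝ ((Fin n → ℝ) × (Fin mI → ℝ) × ((Fin M → ℝ) × ℝ)) (Fin N → ℝ)) with hBdef
  have hBapp : ∀ v : (Fin N → ℝ), B v = K (0, v) := fun v => rfl
  set g : ((Fin N → ℝ) × ((Fin n → ℝ) × (Fin mI → ℝ) × ((Fin M → ℝ) × ℝ))) → ((Fin N → ℝ) × ((Fin n → ℝ) × (Fin mI → ℝ) × ((Fin M → ℝ) × ℝ))) := fun p => (p.1, k (p.2, p.1)) with hgdef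
  have hg_cd : ContDiff ℝ 1 g := by
    apply contDiff_fst.prodMk
    exact hk.comp (contDiff_snd.prodMk contDiff_fst)
  set f₁ : ((Fin N → ℝ) × ((Fin n → ℝ) × (Fin mI → ℝ) × ((Fin M → ℝ) × ℝ))) →L[ℝ] ((Fin N → ℝ) × ((Fin n → ℝ) × (Fin mI → ℝ) × ((Fin M → ℝ) × ℝ))) :=
    (ContinuousLinearMap.fst ℝ (Fin N → ℝ) ((Fin n → ℝ) × (Fin mI → ℝ) × ((Fin M → ℝ) × ℝ))).prod
      ((J : ((Fin n → ℝ) × (Fin mI → ℝ) × ((Fin M → ℝ) × ℝ)) →L[ℝ] ((Fin n → ℝ) × (Fin mI → ℝ) × ((Fin M → ℝ) × ℝ))).comp (ContinuousLinearMap.snd ℝ (Fin N → ℝ) ((Fin n → ℝ) × (Fin mI → ℝ) × ((Fin M → ℝ) × ℝ)))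
        + B.comp (ContinuousLinearMap.fst ℝ (Fin N → ℝ) ((Fin n → ℝ) × (Fin mI → ℝ) × ((Fin M → ℝ) × ℝ)))) with hf₁def
  set f₂ : ((Fin N → ℝ) × ((Fin n → ℝ) × (Fin mI → ℝ) × ((Fin M → ℝ) × ℝ))) →L[ℝ] ((Fin N → ℝ) × ((Fin n → ℝ) × (Fin mI → ℝ) × ((Fin M → ℝ) × ℝ))) :=
    (ContinuousLinearMap.fst ℝ (Fin N → ℝ) ((Fin n → ℝ) × (Fin mI → ℝ) × ((Fin M → ℝ) × ℝ))).prod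
      ((J.symm : ((Fin n → ℝ) × (Fin mI → ℝ) × ((Fin M → ℝ) × ℝ)) →L[ℝ] ((Fin n → ℝ) × (Fin mI → ℝ) × ((Fin M → ℝ) × ℝ))).comp
        ((ContinuousLinearMap.snd ℝ (Fin N → ℝ) ((Fin n → ℝ) × (Fin mI → ℝ) × ((Fin M → ℝ) × ℝ)))
          - B.comp (ContinuousLinearMap.fst ℝ (Fin N → ℝ) ((Fin n → ℝ) × (Fin mI → ℝ) × ((Fin M → ℝ) × ℝ))))) with hf₂def
  have hf₁app : ∀ p : (Fin N → ℝ) × ((Fin n → ℝ) × (Fin mI → ℝ) × ((Fin M → ℝ) × ℝ)), f₁ p = (p.1, J p.2 + B p.1) := fun p => rfl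
  have hf₂app : ∀ p : (Fin N → ℝ) × ((Fin n → ℝ) × (Fin mI → ℝ) × ((Fin M → ℝ) × ℝ)), f₂ p = (p.1, J.symm (p.2 - B p.1)) := fun p => rfl
  set G : ((Fin N → ℝ) × ((Fin n → ℝ) × (Fin mI → ℝ) × ((Fin M → ℝ) × ℝ))) ≃L[ℝ] ((Fin N → ℝ) × ((Fin n → ℝ) × (Fin mI → ℝ) × ((Fin M → ℝ) × ℝ))) := ContinuousLinearEquiv.equivOfInverse f₁ f₂
    (by intro p; rw [hf₁app, hf₂app]; simp)
    (by intro p; rw [hf₂app, hf₁app]; simp) with hGdef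
  have hGsymmapp : ∀ p : (Fin N → ℝ) × ((Fin n → ℝ) × (Fin mI → ℝ) × ((Fin M → ℝ) × ℝ)),
      (G.symm : ((Fin N → ℝ) × ((Fin n → ℝ) × (Fin mI → ℝ) × ((Fin M → ℝ) × ℝ))) →L[ℝ] ((Fin N → ℝ) × ((Fin n → ℝ) × (Fin mI → ℝ) × ((Fin M → ℝ) × ℝ)))) p = f₂ p := fun p => rfl
  have hg' : HasFDerivAt g (G : ((Fin N → ℝ) × ((Fin n → ℝ) × (Fin mI → ℝ) × ((Fin M → ℝ) × ℝ))) →L[ℝ] ((Fin N → ℝ) × ((Fin n → ℝ) × (Fin mI → ℝ) × ((Fin M → ℝ) × ℝ)))) (d₀, zstar) := by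
    have hinner : HasFDerivAt (fun p : (Fin N → ℝ) × ((Fin n → ℝ) × (Fin mI → ℝ) × ((Fin M → ℝ) × ℝ)) => (p.2, p.1))
        ((ContinuousLinearMap.snd ℝ (Fin N → ℝ) ((Fin n → ℝ) × (Fin mI → ℝ) × ((Fin M → ℝ) × ℝ))).prod (ContinuousLinearMap.fst ℝ (Fin N → ℝ) ((Fin n → ℝ) × (Fin mI → ℝ) × ((Fin M → ℝ) × ℝ))))
        (d₀, zstar) := (hasFDerivAt_snd).prodMk (hasFDerivAt_fst)
    have hcomp : HasFDerivAt (fun p : (Fin N → ℝ) × ((Fin n → ℝ) × (Fin mI → ℝ) × ((Fin M → ℝ) × ℝ)) => k (p.2, p.1))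
        (K.comp ((ContinuousLinearMap.snd ℝ (Fin N → ℝ) ((Fin n → ℝ) × (Fin mI → ℝ) × ((Fin M → ℝ) × ℝ))).prod (ContinuousLinearMap.fst ℝ (Fin N → ℝ) ((Fin n → ℝ) × (Fin mI → ℝ) × ((Fin M → ℝ) × ℝ)))))
        (d₀, zstar) := hKd.comp (d₀, zstar) hinner
    have hG0 : HasFDerivAt g
        ((ContinuousLinearMap.fst ℝ (Fin N → ℝ) ((Fin n → ℝ) × (Fin mI → ℝ) × ((Fin M → ℝ) × ℝ))).prod
          (K.comp ((ContinuousLinearMap.snd ℝ (Fin N → ℝ) ((Fin n → ℝ) × (Fin mI → ℝ) × ((Fin M → ℝ) × ℝ))).prod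
            (ContinuousLinearMap.fst ℝ (Fin N → ℝ) ((Fin n → ℝ) × (Fin mI → ℝ) × ((Fin M → ℝ) × ℝ))))))
        (d₀, zstar) := (hasFDerivAt_fst).prodMk hcomp
    have heq : ((ContinuousLinearMap.fst ℝ (Fin N → ℝ) ((Fin n → ℝ) × (Fin mI → ℝ) × ((Fin M → ℝ) × ℝ))).prod
          (K.comp ((ContinuousLinearMap.snd ℝ (Fin N → ℝ) ((Fin n → ℝ) × (Fin mI → ℝ) × ((Fin M → ℝ) × ℝ))).prod
            (ContinuousLinearMap.fst ℝ (Fin N → ℝ) ((Fin n → ℝ) × (Fin mI → ℝ) × ((Fin M → ℝ) × ℝ))))))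
        = (G : ((Fin N → ℝ) × ((Fin n → ℝ) × (Fin mI → ℝ) × ((Fin M → ℝ) × ℝ))) →L[ℝ] ((Fin N → ℝ) × ((Fin n → ℝ) × (Fin mI → ℝ) × ((Fin M → ℝ) × ℝ)))) := by
      apply ContinuousLinearMap.ext
      intro p
      have h2 : (G : ((Fin N → ℝ) × ((Fin n → ℝ) × (Fin mI → ℝ) × ((Fin M → ℝ) × ℝ))) →L[ℝ] ((Fin N → ℝ) × ((Fin n → ℝ) × (Fin mI → ℝ) × ((Fin M → ℝ) × ℝ)))) p = (p.1, J p.2 + B p.1) :=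
        hf₁app p
      rw [h2]
      refine Prod.ext rfl ?_
      have h3 : ((p.2, p.1) : ((Fin n → ℝ) × (Fin mI → ℝ) × ((Fin M → ℝ) × ℝ)) × (Fin N → ℝ))
          = ((p.2, 0) : ((Fin n → ℝ) × (Fin mI → ℝ) × ((Fin M → ℝ) × ℝ)) × (Fin N → ℝ)) + ((0, p.1) : ((Fin n → ℝ) × (Fin mI → ℝ) × ((Fin M → ℝ) × ℝ)) × (Fin N → ℝ)) := by simp
      simp only [ContinuousLinearMap.prod_apply, ContinuousLinearMap.coe_comp',
        Function.comp_apply, ContinuousLinearMap.coe_fst', ContinuousLinearMap.coe_snd']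
      rw [h3, map_add]
      have hJ' : K (p.2, 0) = J p.2 := hJ p.2
      rw [hJ', hBapp]
    rw [← heq]
    exact hG0
  have hgat : ContDiffAt ℝ 1 g (d₀, zstar) := hg_cd.contDiffAt
  have hstrict : HasStrictFDerivAt g (G : ((Fin N → ℝ) × ((Fin n → ℝ) × (Fin mI → ℝ) × ((Fin M → ℝ) × ℝ))) →L[ℝ] ((Fin N → ℝ) × ((Fin n → ℝ) × (Fin mI → ℝ) × ((Fin M → ℝ) × ℝ)))) (d₀, zstar) :=
    hgat.hasStrictFDerivAt' hg' one_ne_zero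
  set li : ((Fin N → ℝ) × ((Fin n → ℝ) × (Fin mI → ℝ) × ((Fin M → ℝ) × ℝ))) → ((Fin N → ℝ) × ((Fin n → ℝ) × (Fin mI → ℝ) × ((Fin M → ℝ) × ℝ))) := hstrict.localInverse g G (d₀, zstar)
    with hlidef
  have hga : g (d₀, zstar) = ((d₀, 0) : (Fin N → ℝ) × ((Fin n → ℝ) × (Fin mI → ℝ) × ((Fin M → ℝ) × ℝ))) := by
    rw [hgdef]; exact Prod.ext rfl hroot
  have hli0 : li ((d₀, 0) : (Fin N → ℝ) × ((Fin n → ℝ) × (Fin mI → ℝ) × ((Fin M → ℝ) × ℝ))) = (d₀, zstar) := by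
    rw [← hga]; exact hstrict.localInverse_apply_image
  have hli_cd : ContDiffAt ℝ 1 li ((d₀, 0) : (Fin N → ℝ) × ((Fin n → ℝ) × (Fin mI → ℝ) × ((Fin M → ℝ) × ℝ))) := by
    have h := hgat.to_localInverse hg' one_ne_zero
    rw [hga] at h
    exact h
  have hli_deriv : HasFDerivAt li ((G.symm : ((Fin N → ℝ) × ((Fin n → ℝ) × (Fin mI → ℝ) × ((Fin M → ℝ) × ℝ))) →L[ℝ] ((Fin N → ℝ) × ((Fin n → ℝ) × (Fin mI → ℝ) × ((Fin M → ℝ) × ℝ)))))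
      ((d₀, 0) : (Fin N → ℝ) × ((Fin n → ℝ) × (Fin mI → ℝ) × ((Fin M → ℝ) × ℝ))) := by
    have h := hstrict.to_localInverse.hasFDerivAt
    rw [hga] at h
    exact h
  have hrinv : ∀ᶠ y in nhds ((d₀, 0) : (Fin N → ℝ) × ((Fin n → ℝ) × (Fin mI → ℝ) × ((Fin M → ℝ) × ℝ))), g (li y) = y := by
    have h := hstrict.eventually_right_inverse
    rw [hga] at h
    exact h
  set z : (Fin N → ℝ) → ((Fin n → ℝ) × (Fin mI → ℝ) × ((Fin M → ℝ) × ℝ)) := fun d => (li (d, 0)).2 with hzdef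
  have hι : ContDiff ℝ 1 (fun d : (Fin N → ℝ) => ((d, 0) : (Fin N → ℝ) × ((Fin n → ℝ) × (Fin mI → ℝ) × ((Fin M → ℝ) × ℝ)))) :=
    contDiff_id.prodMk contDiff_const
  have hcomp1 : ContDiffAt ℝ 1 (fun d : (Fin N → ℝ) => li (d, 0)) d₀ :=
    ContDiffAt.comp d₀ hli_cd hι.contDiffAt
  have hz_cdat : ContDiffAt ℝ 1 z d₀ :=
    ContDiffAt.comp d₀ (contDiff_snd.contDiffAt) hcomp1
  obtain ⟨ u, hu_nhds, hu ⟩ := hz_cdat.contDiffOn le_rfl (by simp)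
  have htend : Filter.Tendsto (fun d : (Fin N → ℝ) => ((d, 0) : (Fin N → ℝ) × ((Fin n → ℝ) × (Fin mI → ℝ) × ((Fin M → ℝ) × ℝ)))) (nhds d₀)
      (nhds ((d₀, 0) : (Fin N → ℝ) × ((Fin n → ℝ) × (Fin mI → ℝ) × ((Fin M → ℝ) × ℝ)))) :=
    (Continuous.tendsto (continuous_id.prodMk continuous_const) d₀)
  have hev : ∀ᶠ d in nhds d₀, g (li (d, 0)) = ((d, 0) : (Fin N → ℝ) × ((Fin n → ℝ) × (Fin mI → ℝ) × ((Fin M → ℝ) × ℝ))) :=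
    htend.eventually hrinv
  obtain ⟨ ε, hε, hball ⟩ := Metric.mem_nhds_iff.mp (Filter.inter_mem hu_nhds hev)
  have hzball : ∀ d ∈ ball d₀ ε, g (li (d, 0)) = ((d, 0) : (Fin N → ℝ) × ((Fin n → ℝ) × (Fin mI → ℝ) × ((Fin M → ℝ) × ℝ))) :=
    fun d hd => (hball hd).2
  have hzcd : ContDiffOn ℝ 1 z (ball d₀ ε) :=
    hu.mono (fun d hd => (hball hd).1)
  refine ⟨ ε, hε, z, ?_, hzcd, ?_, ?_, ?_ ⟩
  · rw [hzdef]; simp only; rw [hli0]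
  · intro d hd
    have h2 := hzball d hd
    have hfst : (li (d, 0)).1 = d := congrArg Prod.fst h2
    have hsnd : k ((li (d, 0)).2, (li (d, 0)).1) = 0 := congrArg Prod.snd h2
    rw [hfst] at hsnd
    exact hsnd
  · intro v
    have hιd : HasFDerivAt (fun d : (Fin N → ℝ) => ((d, 0) : (Fin N → ℝ) × ((Fin n → ℝ) × (Fin mI → ℝ) × ((Fin M → ℝ) × ℝ))))
        ((ContinuousLinearMap.id ℝ (Fin N → ℝ)).prod (0 : (Fin N → ℝ) →L[ℝ] ((Fin n → ℝ) × (Fin mI → ℝ) × ((Fin M → ℝ) × ℝ)))) d₀ :=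
      (hasFDerivAt_id d₀).prodMk (hasFDerivAt_const (0 : ((Fin n → ℝ) × (Fin mI → ℝ) × ((Fin M → ℝ) × ℝ))) d₀)
    have h1 : HasFDerivAt (fun d : (Fin N → ℝ) => li (d, 0))
        ((G.symm : ((Fin N → ℝ) × ((Fin n → ℝ) × (Fin mI → ℝ) × ((Fin M → ℝ) × ℝ))) →L[ℝ] ((Fin N → ℝ) × ((Fin n → ℝ) × (Fin mI → ℝ) × ((Fin M → ℝ) × ℝ)))).comp
          ((ContinuousLinearMap.id ℝ (Fin N → ℝ)).prod (0 : (Fin N → ℝ) →L[ℝ] ((Fin n → ℝ) × (Fin mI → ℝ) × ((Fin M → ℝ) × ℝ))))) d₀ :=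
      hli_deriv.comp d₀ hιd
    have hz_has : HasFDerivAt z
        ((ContinuousLinearMap.snd ℝ (Fin N → ℝ) ((Fin n → ℝ) × (Fin mI → ℝ) × ((Fin M → ℝ) × ℝ))).comp
          ((G.symm : ((Fin N → ℝ) × ((Fin n → ℝ) × (Fin mI → ℝ) × ((Fin M → ℝ) × ℝ))) →L[ℝ] ((Fin N → ℝ) × ((Fin n → ℝ) × (Fin mI → ℝ) × ((Fin M → ℝ) × ℝ)))).comp
            ((ContinuousLinearMap.id ℝ (Fin N → ℝ)).prod (0 : (Fin N → ℝ) →L[ℝ] ((Fin n → ℝ) × (Fin mI → ℝ) × ((Fin M → ℝ) × ℝ)))))) d₀ :=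
      HasFDerivAt.comp d₀ hasFDerivAt_snd h1
    rw [hz_has.fderiv]
    simp only [ContinuousLinearMap.coe_comp', Function.comp_apply,
      ContinuousLinearMap.prod_apply, ContinuousLinearMap.coe_id', id_eq,
      ContinuousLinearMap.zero_apply, ContinuousLinearMap.coe_snd']
    rw [hGsymmapp, hf₂app]
    simp only
    rw [hBapp, zero_sub, map_neg]
  · intro d hd v
    have hz_diff : DifferentiableAt ℝ z d :=
      ((hzcd.contDiffAt (isOpen_ball.mem_nhds hd)).differentiableAt one_ne_zero)
    have hdh : DifferentiableAt ℝ (fun d' => (z d').2.2) d := hz_diff.snd.snd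
    set L : (Fin N → ℝ) →L[ℝ] ((Fin M → ℝ) × ℝ) := fderiv ℝ (fun d' => (z d').2.2) d with hLdef
    have hL : HasFDerivAt (fun d' => (z d').2.2) L d := hdh.hasFDerivAt
    set A : ((Fin M → ℝ) × ℝ) →L[ℝ] (Fin N → ℝ) :=
      (LinearMap.toContinuousLinearMap (Matrix.mulVecLin F.transpose)).comp
        (ContinuousLinearMap.fst ℝ (Fin M → ℝ) ℝ)
      + (ContinuousLinearMap.snd ℝ (Fin M → ℝ) ℝ).smulRight (1 : (Fin N → ℝ)) with hAdef
    have hAapp : ∀ w : (Fin M → ℝ) × ℝ,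
        A w = F.transpose.mulVec w.1 + w.2 • (1 : (Fin N → ℝ)) := by
      intro w
      rw [hAdef]
      simp [Matrix.mulVecLin_apply, Matrix.mulVec_transpose]
    have hfun : (fun d' => (Matrix.diagonal (fun i => d' i / s i)).mulVec
            (ω - (F.transpose.mulVec ((z d').2.2).1
                    + ((z d').2.2).2 • (1 : (Fin N → ℝ)))))
        = (fun d' => fun i => (d' i * (s i)⁻¹) * (ω i - A ((z d').2.2) i)) := by
      funext d' i
      rw [hAapp]
      simp [Matrix.mulVec_diagonal, div_eq_mul_inv]
    rw [hfun]
    have hAe : HasFDerivAt (fun d' => A ((z d').2.2)) (A.comp L) d :=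
      (A.hasFDerivAt).comp d hL
    set φ' : ∀ _ : Fin N, (Fin N → ℝ) →L[ℝ] ℝ := fun i =>
      (d i * (s i)⁻¹) • (-((ContinuousLinearMap.proj i).comp (A.comp L)))
        + (ω i - A ((z d).2.2) i) •
            ((s i)⁻¹ • (ContinuousLinearMap.proj i : (Fin N → ℝ) →L[ℝ] ℝ)) with hφ'def
    have hP : HasFDerivAt
        (fun d' => fun i => (d' i * (s i)⁻¹) * (ω i - A ((z d').2.2) i))
        (ContinuousLinearMap.pi φ') d := by
      apply hasFDerivAt_pi.mpr
      intro i
      have hc : HasFDerivAt (fun d' : (Fin N → ℝ) => d' i * (s i)⁻¹)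
          ((s i)⁻¹ • (ContinuousLinearMap.proj i : (Fin N → ℝ) →L[ℝ] ℝ)) d :=
        (hasFDerivAt_apply i d).mul_const ((s i)⁻¹)
      have hei : HasFDerivAt (fun d' => A ((z d').2.2) i)
          ((ContinuousLinearMap.proj i).comp (A.comp L)) d :=
        ((ContinuousLinearMap.proj i : (Fin N → ℝ) →L[ℝ] ℝ).hasFDerivAt).comp d hAe
      have he : HasFDerivAt (fun d' => ω i - A ((z d').2.2) i)
          (-((ContinuousLinearMap.proj i).comp (A.comp L))) d :=
        hei.const_sub (ω i)
      exact hc.mul he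
    rw [hP.fderiv]
    funext i
    have hALv : A (L v) = F.transpose.mulVec (L v).1 + (L v).2 • (1 : (Fin N → ℝ)) := hAapp _
    simp only [ContinuousLinearMap.pi_apply, hφ'def, ContinuousLinearMap.add_apply,
      ContinuousLinearMap.smul_apply, ContinuousLinearMap.neg_apply,
      ContinuousLinearMap.coe_comp', Function.comp_apply, ContinuousLinearMap.proj_apply,
      Pi.add_apply, Pi.neg_apply, smul_eq_mul, Matrix.mulVec_diagonal, Pi.sub_apply]
    rw [hAapp (L v), hAapp ((z d).2.2)]
    simp only [Pi.add_apply, Pi.smul_apply, Pi.one_apply, smul_eq_mul, Pi.sub_apply]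
    have hsi := (hs i).ne'
    field_simp
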